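/- arXiv:1903.08357 — 2 statements merged into one kernel-verified Lean document; each statement's English description precedes it below -/
import Mathlib

section
/- Let X, X', J be finite types and set I := X × X'. Let U : Matrix X X ℂ be unitary, let A be an expectation on I × J, and let U₁ : Matrix (I × J) (I × J) ℂ be the extension (U ⊗ 1_{X'}) ⊗ 1_J of U by identities. Then the judgment qRHL(U₁ᴴ * A * U₁, ρ ↦ (U ⊗ 1_{X'}) * ρ * (U ⊗ 1_{X'})ᴴ, id, A) holds. [Rule Apply1] -/
open Matrix Kronecker ComplexOrder

noncomputable section

/-- Partial trace over the second factor: `tr₂(ρ) i i' = ∑ j, ρ (i,j) (i',j)`. -/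
def trB {I J : Type*} [Fintype J] (ρ : Matrix (I × J) (I × J) ℂ) : Matrix I I ℂ :=
  Matrix.of fun i i' => ∑ j, ρ (i, j) (i', j)

/-- Partial trace over the first factor: `tr₁(ρ) j j' = ∑ i, ρ (i,j) (i,j')`. -/
def trA {I J : Type*} [Fintype I] (ρ : Matrix (I × J) (I × J) ℂ) : Matrix J J ℂ :=
  Matrix.of fun j j' => ∑ i, ρ (i, j) (i, j')

/-- `ρ` is separable iff it is a finite sum of Kronecker products of
positive semidefinite matrices. -/
def Separable {I J : Type*} [Fintype I] [Fintype J]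
    (ρ : Matrix (I × J) (I × J) ℂ) : Prop :=
  ∃ (n : ℕ) (σ : Fin n → Matrix I I ℂ) (τ : Fin n → Matrix J J ℂ),
    (∀ k, (σ k).PosSemidef) ∧ (∀ k, (τ k).PosSemidef) ∧ ρ = ∑ k, σ k ⊗ₖ τ k

/-- The expectation-qRHL judgment `qRHL(A, E1, E2, B)`. -/
def qRHL {I J : Type*} [Fintype I] [Fintype J]
    (A : Matrix (I × J) (I × J) ℂ)
    (E1 : Matrix I I ℂ → Matrix I I ℂ) (E2 : Matrix J J ℂ → Matrix J J ℂ)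
    (B : Matrix (I × J) (I × J) ℂ) : Prop :=
  ∀ ρ : Matrix (I × J) (I × J) ℂ, ρ.PosSemidef → Separable ρ →
    ∃ ρ' : Matrix (I × J) (I × J) ℂ, ρ'.PosSemidef ∧ Separable ρ' ∧
      trB ρ' = E1 (trB ρ) ∧ trA ρ' = E2 (trA ρ) ∧
      (Matrix.trace (A * ρ)).re ≤ (Matrix.trace (B * ρ')).re

lemma kron_conjTranspose {I J : Type*} (A : Matrix I I ℂ) (B : Matrix J J ℂ) :
    (A ⊗ₖ B)ᴴ = Aᴴ ⊗ₖ Bᴴ := by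
  ext ⟨i, j⟩ ⟨i', j'⟩
  simp [conjTranspose_apply, kroneckerMap_apply, mul_comm]

lemma trB_kron {I J : Type*} [Fintype J] (σ : Matrix I I ℂ) (τ : Matrix J J ℂ) :
    trB (σ ⊗ₖ τ) = τ.trace • σ := by
  ext i i'
  simp [trB, trace, Matrix.diag, Finset.mul_sum, mul_comm]

lemma trA_kron {I J : Type*} [Fintype I] (σ : Matrix I I ℂ) (τ : Matrix J J ℂ) :
    trA (σ ⊗ₖ τ) = σ.trace • τ := by
  ext j j'
  simp [trA, trace, Matrix.diag, Finset.sum_mul]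

lemma trB_sum {I J : Type*} [Fintype J] {n : ℕ}
    (f : Fin n → Matrix (I × J) (I × J) ℂ) :
    trB (∑ k, f k) = ∑ k, trB (f k) := by
  ext i i'
  simp only [trB, Matrix.sum_apply, Matrix.of_apply]
  rw [Finset.sum_comm]

lemma trA_sum {I J : Type*} [Fintype I] {n : ℕ}
    (f : Fin n → Matrix (I × J) (I × J) ℂ) :
    trA (∑ k, f k) = ∑ k, trA (f k) := by
  ext j j'
  simp only [trA, Matrix.sum_apply, Matrix.of_apply]
  rw [Finset.sum_comm]

/-- Rule Apply1: applying a unitary `U` on the `X`-part of the left program. -/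
theorem qRHL_apply1 {X X' J : Type*} [Fintype X] [Fintype X'] [Fintype J]
    [DecidableEq X] [DecidableEq X'] [DecidableEq J]
    (U : Matrix X X ℂ) (hU : U ∈ Matrix.unitaryGroup X ℂ)
    (A : Matrix ((X × X') × J) ((X × X') × J) ℂ) (hA : A.PosSemidef) :
    qRHL
      (((U ⊗ₖ (1 : Matrix X' X' ℂ)) ⊗ₖ (1 : Matrix J J ℂ))ᴴ * A *
        ((U ⊗ₖ (1 : Matrix X' X' ℂ)) ⊗ₖ (1 : Matrix J J ℂ)))
      (fun ρ => (U ⊗ₖ (1 : Matrix X' X' ℂ)) * ρ * (U ⊗ₖ (1 : Matrix X' X' ℂ))ᴴ)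
      id A := by
  intro ρ hρ hsep
  obtain ⟨n, σ, τ, hσ, hτ, hρeq⟩ := hsep
  set V : Matrix (X × X') (X × X') ℂ := U ⊗ₖ (1 : Matrix X' X' ℂ) with hVdef
  set V₁ : Matrix ((X × X') × J) ((X × X') × J) ℂ :=
    V ⊗ₖ (1 : Matrix J J ℂ) with hV₁def
  have hUU : Uᴴ * U = 1 := by
    simpa [star_eq_conjTranspose] using Matrix.mem_unitaryGroup_iff'.mp hU
  have hVV : Vᴴ * V = 1 := by
    rw [hVdef, kron_conjTranspose, ← mul_kronecker_mul, hUU]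
    simp
  -- decomposition of the new state
  have hdecomp : V₁ * ρ * V₁ᴴ = ∑ k, (V * σ k * Vᴴ) ⊗ₖ τ k := by
    rw [hρeq, Finset.mul_sum, Finset.sum_mul]
    refine Finset.sum_congr rfl fun k _ => ?_
    rw [hV₁def, kron_conjTranspose, ← mul_kronecker_mul, ← mul_kronecker_mul]
    simp
  refine ⟨V₁ * ρ * V₁ᴴ, hρ.mul_mul_conjTranspose_same V₁, ?_, ?_, ?_, ?_⟩
  · exact ⟨n, fun k => V * σ k * Vᴴ, τ,
      fun k => (hσ k).mul_mul_conjTranspose_same V, hτ, hdecomp⟩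
  · rw [hdecomp, trB_sum, hρeq, trB_sum]
    simp only [trB_kron]
    rw [Finset.mul_sum, Finset.sum_mul]
    refine Finset.sum_congr rfl fun k _ => ?_
    rw [Matrix.mul_smul, Matrix.smul_mul]
  · rw [hdecomp, trA_sum, hρeq, trA_sum, id]
    simp only [trA_kron]
    refine Finset.sum_congr rfl fun k _ => ?_
    congr 1
    rw [Matrix.trace_mul_cycle, hVV, Matrix.one_mul]
  · have : Matrix.trace ((V₁ᴴ * A * V₁) * ρ) = Matrix.trace (A * (V₁ * ρ * V₁ᴴ)) := by
      rw [Matrix.mul_assoc, Matrix.mul_assoc, Matrix.trace_mul_comm (V₁ᴴ),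
        Matrix.mul_assoc, Matrix.mul_assoc]
    rw [this]
end
end

section
/- Fix n ≥ 1 and set θ := π / (2 * n) and ε := (Real.cos θ)^2. Let R : Matrix (Fin 2) (Fin 2) ℂ be the rotation matrix with real entries !![cos θ, -sin θ; sin θ, cos θ], let e₀ := ![1, 0], φ_i := (R^i).mulVec e₀, and Q_i := vecMulVec φ_i (star φ_i). Define ρ_0 := vecMulVec e₀ (star e₀) and ρ_{i+1} := Q_{i+1} * ρ_i * Q_{i+1} + (1 - Q_{i+1}) * ρ_i * (1 - Q_{i+1}) for 0 ≤ i < n (the state after i+1 projective Zeno measurements). Let S : Matrix ((Fin 2) × (Fin 2)) ((Fin 2) × (Fin 2)) ℂ be the swap operator S (x,y) (x',y') = if x = y' ∧ y = x' then 1 else 0, and Eq := (1/2 : ℂ) • (1 + S). Then there exists a separable positive semidefinite ρ' : Matrix ((Fin 2) × (Fin 2)) ((Fin 2) × (Fin 2)) ℂ such that tr₂(ρ') = vecMulVec φ_n (star φ_n), tr₁(ρ') = ρ_n, and ε^n ≤ (Matrix.trace (Eq * ρ')).re. -/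
open Matrix Kronecker ComplexOrder

noncomputable section

/-!
The coupling is the product state `|φₙ⟩⟨φₙ| ⊗ ρₙ`. Since
`tr ((1 + SWAP) (A ⊗ B)) = tr A tr B + tr (A B)`, its weight on `Eq` is `(1 + ⟨φₙ|ρₙ|φₙ⟩) / 2`,
so it suffices to show `⟨φₙ|ρₙ|φₙ⟩ ≥ εⁿ`. This follows from the operator inequality
`ρᵢ ≥ εⁱ |φᵢ⟩⟨φᵢ|`, which survives each measurement because
`|v⟩⟨v| |u⟩⟨u| |v⟩⟨v| = |⟨v,u⟩|² |v⟩⟨v|` and consecutive vectors `φᵢ, φᵢ₊₁` have overlap `cos θ`.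
-/

section Measurement

variable {𝕜 m : Type*} [RCLike 𝕜]

theorem Matrix.PosSemidef.of_sub {A B : Matrix m m 𝕜} (hAB : (A - B).PosSemidef)
    (hB : B.PosSemidef) : A.PosSemidef := by
  simpa using hAB.add hB

variable [Fintype m]

theorem isIdempotentElem_vecMulVec_self_star {v : m → 𝕜} (hv : star v ⬝ᵥ v = 1) :
    IsIdempotentElem (vecMulVec v (star v)) := by
  rw [IsIdempotentElem, vecMulVec_mul_vecMulVec, hv, one_smul]

theorem vecMulVec_self_star_mul_mul_self (u v : m → 𝕜) :
    vecMulVec v (star v) * vecMulVec u (star u) * vecMulVec v (star v) =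
      (‖star v ⬝ᵥ u‖ ^ 2 : ℝ) • vecMulVec v (star v) := by
  rw [vecMulVec_mul_vecMulVec, vecMulVec_mul_vecMulVec, smul_dotProduct, smul_eq_mul,
    star_dotProduct u, RCLike.star_def, RCLike.mul_conj, vecMulVec_smul, ← RCLike.ofReal_pow]
  exact algebraMap_smul 𝕜 _ _

theorem le_re_trace_vecMulVec_mul {v : m → 𝕜} (hv : star v ⬝ᵥ v = 1) {ρ : Matrix m m 𝕜}
    {c : ℝ} (h : (ρ - c • vecMulVec v (star v)).PosSemidef) :
    c ≤ RCLike.re (vecMulVec v (star v) * ρ).trace := by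
  have hnonneg := h.dotProduct_mulVec_nonneg v
  rw [dotProduct_mulVec, ← dotProduct_comm, ← trace_vecMulVec, ← vecMulVec_mul, mul_sub,
    trace_sub, mul_smul_comm, (isIdempotentElem_vecMulVec_self_star hv).eq, trace_smul,
    trace_vecMulVec, dotProduct_comm, hv] at hnonneg
  simpa [sub_nonneg, RCLike.smul_re] using (RCLike.nonneg_iff.mp hnonneg).1

variable [DecidableEq m]

def measureChannel (P ρ : Matrix m m 𝕜) : Matrix m m 𝕜 :=
  P * ρ * P + (1 - P) * ρ * (1 - P)

theorem Matrix.PosSemidef.measureChannel {P ρ : Matrix m m 𝕜} (hP : P.IsHermitian)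
    (hρ : ρ.PosSemidef) : (_root_.measureChannel P ρ).PosSemidef := by
  have h1 := hρ.mul_mul_conjTranspose_same P
  have h2 := hρ.mul_mul_conjTranspose_same (1 - P)
  rw [hP.eq] at h1
  rw [conjTranspose_sub, conjTranspose_one, hP.eq] at h2
  exact h1.add h2

theorem trace_measureChannel {P : Matrix m m 𝕜} (hP : IsIdempotentElem P) (ρ : Matrix m m 𝕜) :
    (measureChannel P ρ).trace = ρ.trace := by
  rw [measureChannel, trace_add, trace_mul_cycle, trace_mul_cycle (1 - P), hP.eq,
    hP.one_sub.eq, ← trace_add, ← add_mul, add_sub_cancel, one_mul]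

theorem Matrix.PosSemidef.measureChannel_sub_smul {ρ : Matrix m m 𝕜} {u : m → 𝕜} {c : ℝ}
    (hc : 0 ≤ c) (h : (ρ - c • vecMulVec u (star u)).PosSemidef) (v : m → 𝕜) :
    (_root_.measureChannel (vecMulVec v (star v)) ρ -
      (c * ‖star v ⬝ᵥ u‖ ^ 2) • vecMulVec v (star v)).PosSemidef := by
  have hP := (posSemidef_vecMulVec_self_star v).isHermitian
  have hleak := ((posSemidef_vecMulVec_self_star u).mul_mul_conjTranspose_same
    (1 - vecMulVec v (star v))).smul hc
  rw [conjTranspose_sub, conjTranspose_one, hP.eq] at hleak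
  -- for `P = |v⟩⟨v|` the left side is `measureChannel P (ρ - c|u⟩⟨u|) + c (1-P) |u⟩⟨u| (1-P)`
  convert (h.measureChannel hP).add hleak using 1
  simp only [_root_.measureChannel, mul_sub, sub_mul, mul_smul_comm, smul_mul_assoc,
    vecMulVec_self_star_mul_mul_self, mul_smul]
  module

def zenoStates (φ : ℕ → m → 𝕜) : ℕ → Matrix m m 𝕜
  | 0 => vecMulVec (φ 0) (star (φ 0))
  | i + 1 => measureChannel (vecMulVec (φ (i + 1)) (star (φ (i + 1)))) (zenoStates φ i)

theorem posSemidef_zenoStates_sub_smul (φ : ℕ → m → 𝕜) (i : ℕ) :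
    (zenoStates φ i - (∏ k ∈ Finset.range i, ‖star (φ (k + 1)) ⬝ᵥ φ k‖ ^ 2) •
      vecMulVec (φ i) (star (φ i))).PosSemidef := by
  induction i with
  | zero => simpa [zenoStates] using PosSemidef.zero
  | succ i ih =>
    rw [Finset.prod_range_succ]
    exact ih.measureChannel_sub_smul (by positivity) (φ (i + 1))

theorem trace_zenoStates {φ : ℕ → m → 𝕜} (hφ : ∀ i, star (φ i) ⬝ᵥ φ i = 1) (i : ℕ) :
    (zenoStates φ i).trace = 1 := by
  induction i with
  | zero => rw [zenoStates, trace_vecMulVec, dotProduct_comm, hφ]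
  | succ i ih =>
    rw [zenoStates, trace_measureChannel (isIdempotentElem_vecMulVec_self_star (hφ _)), ih]

end Measurement

section Coupling

variable {I J : Type*}

theorem trB_kronecker [Fintype J] (A : Matrix I I ℂ) (B : Matrix J J ℂ) :
    trB (A ⊗ₖ B) = B.trace • A := by
  ext i i'
  simp only [trB, of_apply, kroneckerMap_apply, Matrix.smul_apply, trace, diag, smul_eq_mul,
    Finset.sum_mul, mul_comm (A i i')]

theorem trA_kronecker [Fintype I] (A : Matrix I I ℂ) (B : Matrix J J ℂ) :
    trA (A ⊗ₖ B) = A.trace • B := by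
  ext j j'
  simp only [trA, of_apply, kroneckerMap_apply, Matrix.smul_apply, trace, diag, smul_eq_mul,
    Finset.sum_mul]

theorem separable_kronecker [Fintype I] [Fintype J] {A : Matrix I I ℂ} {B : Matrix J J ℂ}
    (hA : A.PosSemidef) (hB : B.PosSemidef) : Separable (A ⊗ₖ B) :=
  ⟨1, fun _ => A, fun _ => B, fun _ => hA, fun _ => hB, by simp⟩

def swapMatrix (I : Type*) [DecidableEq I] : Matrix (I × I) (I × I) ℂ :=
  of fun p q => if p.1 = q.2 ∧ p.2 = q.1 then 1 else 0

variable [Fintype I] [DecidableEq I]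

theorem trace_swapMatrix_mul_kronecker (A B : Matrix I I ℂ) :
    (swapMatrix I * (A ⊗ₖ B)).trace = (A * B).trace := by
  simp only [swapMatrix, trace, ite_and, diag_apply, mul_apply, of_apply, kroneckerMap_apply,
    ite_mul, one_mul, zero_mul, Fintype.sum_prod_type, Finset.sum_ite_eq, Finset.mem_univ,
    ↓reduceIte]
  exact Finset.sum_comm

theorem re_trace_symmetrizer_mul_kronecker {A B : Matrix I I ℂ} (hA : A.trace = 1)
    (hB : B.trace = 1) :
    (((1 / 2 : ℂ) • (1 + swapMatrix I)) * (A ⊗ₖ B)).trace.re = (1 + (A * B).trace.re) / 2 := by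
  rw [smul_mul, add_mul, one_mul, trace_smul, trace_add, trace_kronecker,
    trace_swapMatrix_mul_kronecker, hA, hB, one_mul, smul_eq_mul, one_div_mul_eq_div,
    Complex.div_ofNat_re, Complex.add_re, Complex.one_re]

end Coupling

section Rotation

open Real

theorem rotation_pow_mulVec (θ : ℝ) (i : ℕ) :
    (!![(cos θ : ℂ), -(sin θ : ℂ); (sin θ : ℂ), (cos θ : ℂ)] ^ i) *ᵥ ![1, 0] =
      ![(cos (i * θ) : ℂ), (sin (i * θ) : ℂ)] := by
  induction i with
  | zero => simp
  | succ i ih =>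
    rw [pow_succ', ← mulVec_mulVec, ih]
    ext k
    fin_cases k <;> simp [mulVec, dotProduct, add_mul, Complex.cos_add, Complex.sin_add] <;> ring

theorem star_dotProduct_cos_sin (a b : ℝ) :
    star ![(cos a : ℂ), (sin a : ℂ)] ⬝ᵥ ![(cos b : ℂ), (sin b : ℂ)] = (cos (a - b) : ℂ) := by
  simp only [dotProduct, Fin.sum_univ_two, Pi.star_apply, cons_val_zero, cons_val_one,
    RCLike.star_def, Complex.conj_ofReal]
  push_cast [cos_sub]
  ring

end Rotation

theorem zeno_coupling_general (n : ℕ) :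
    let θ : ℝ := Real.pi / (2 * n)
    let ε : ℝ := (Real.cos θ) ^ 2
    let R : Matrix (Fin 2) (Fin 2) ℂ :=
      !![(Real.cos θ : ℂ), -(Real.sin θ : ℂ); (Real.sin θ : ℂ), (Real.cos θ : ℂ)]
    let e₀ : Fin 2 → ℂ := ![1, 0]
    let φ : ℕ → Fin 2 → ℂ := fun i => (R ^ i).mulVec e₀
    let Q : ℕ → Matrix (Fin 2) (Fin 2) ℂ := fun i => vecMulVec (φ i) (star (φ i))
    -- state after `i` projective Zeno measurements
    let ρseq : ℕ → Matrix (Fin 2) (Fin 2) ℂ := fun i =>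
      Nat.rec (vecMulVec e₀ (star e₀))
        (fun k acc => Q (k + 1) * acc * Q (k + 1) +
          (1 - Q (k + 1)) * acc * (1 - Q (k + 1))) i
    let S : Matrix (Fin 2 × Fin 2) (Fin 2 × Fin 2) ℂ :=
      Matrix.of fun p q => if p.1 = q.2 ∧ p.2 = q.1 then 1 else 0
    let EqM : Matrix (Fin 2 × Fin 2) (Fin 2 × Fin 2) ℂ := (1 / 2 : ℂ) • (1 + S)
    ∃ ρ' : Matrix (Fin 2 × Fin 2) (Fin 2 × Fin 2) ℂ,
      ρ'.PosSemidef ∧ Separable ρ' ∧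
      trB ρ' = vecMulVec (φ n) (star (φ n)) ∧
      trA ρ' = ρseq n ∧
      ε ^ n ≤ (Matrix.trace (EqM * ρ')).re := by
  intro θ ε R e₀ φ Q ρseq S EqM
  have hφ (i : ℕ) : φ i = ![(Real.cos (i * θ) : ℂ), (Real.sin (i * θ) : ℂ)] :=
    rotation_pow_mulVec θ i
  have hunit (i : ℕ) : star (φ i) ⬝ᵥ φ i = 1 := by
    rw [hφ, star_dotProduct_cos_sin, sub_self, Real.cos_zero, Complex.ofReal_one]
  have hoverlap (k : ℕ) : ‖star (φ (k + 1)) ⬝ᵥ φ k‖ ^ 2 = ε := by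
    rw [hφ, hφ, star_dotProduct_cos_sin, Complex.norm_real, Real.norm_eq_abs, sq_abs]
    push_cast
    ring_nf
    rfl
  have hρ (i : ℕ) : ρseq i = zenoStates φ i := by
    induction i with
    | zero => rw [zenoStates]; simp only [φ, pow_zero, one_mulVec]; rfl
    | succ i ih => rw [zenoStates, ← ih]; rfl
  have hzeno : (ρseq n - ε ^ n • Q n).PosSemidef := by
    have h := posSemidef_zenoStates_sub_smul φ n
    rwa [← hρ, Finset.prod_congr rfl fun k _ => hoverlap k, Finset.prod_const,
      Finset.card_range] at h
  have hQ : (Q n).PosSemidef := posSemidef_vecMulVec_self_star _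
  have hρn : (ρseq n).PosSemidef := hzeno.of_sub (hQ.smul (by positivity))
  have hQtr : (Q n).trace = 1 := by rw [trace_vecMulVec, dotProduct_comm, hunit]
  have hρtr : (ρseq n).trace = 1 := by rw [hρ, trace_zenoStates hunit]
  refine ⟨Q n ⊗ₖ ρseq n, hQ.kronecker hρn, separable_kronecker hQ hρn, ?_, ?_, ?_⟩
  · rw [trB_kronecker, hρtr, one_smul]
  · rw [trA_kronecker, hQtr, one_smul]
  · have hweight : ε ^ n ≤ (Q n * ρseq n).trace.re := le_re_trace_vecMulVec_mul (hunit n) hzeno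
    have hεn : ε ^ n ≤ 1 := pow_le_one₀ (sq_nonneg _) (Real.cos_sq_le_one θ)
    calc ε ^ n ≤ (1 + (Q n * ρseq n).trace.re) / 2 := by linarith
      _ = (EqM * (Q n ⊗ₖ ρseq n)).trace.re := (re_trace_symmetrizer_mul_kronecker hQtr hρtr).symm

/-- Discrete quantum Zeno effect: the final state of the rotated qubit and the
final state of the repeatedly measured qubit admit a separable coupling whose
quantum-equality weight is at least `ε^n`. -/
theorem zeno_coupling (n : ℕ) (hn : 1 ≤ n) :
    let θ : ℝ := Real.pi / (2 * n)
    let ε : ℝ := (Real.cos θ) ^ 2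
    let R : Matrix (Fin 2) (Fin 2) ℂ :=
      !![(Real.cos θ : ℂ), -(Real.sin θ : ℂ); (Real.sin θ : ℂ), (Real.cos θ : ℂ)]
    let e₀ : Fin 2 → ℂ := ![1, 0]
    let φ : ℕ → Fin 2 → ℂ := fun i => (R ^ i).mulVec e₀
    let Q : ℕ → Matrix (Fin 2) (Fin 2) ℂ := fun i => vecMulVec (φ i) (star (φ i))
    -- state after `i` projective Zeno measurements
    let ρseq : ℕ → Matrix (Fin 2) (Fin 2) ℂ := fun i =>
      Nat.rec (vecMulVec e₀ (star e₀))
        (fun k acc => Q (k + 1) * acc * Q (k + 1) +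
          (1 - Q (k + 1)) * acc * (1 - Q (k + 1))) i
    let S : Matrix (Fin 2 × Fin 2) (Fin 2 × Fin 2) ℂ :=
      Matrix.of fun p q => if p.1 = q.2 ∧ p.2 = q.1 then 1 else 0
    let EqM : Matrix (Fin 2 × Fin 2) (Fin 2 × Fin 2) ℂ := (1 / 2 : ℂ) • (1 + S)
    ∃ ρ' : Matrix (Fin 2 × Fin 2) (Fin 2 × Fin 2) ℂ,
      ρ'.PosSemidef ∧ Separable ρ' ∧
      trB ρ' = vecMulVec (φ n) (star (φ n)) ∧
      trA ρ' = ρseq n ∧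
      ε ^ n ≤ (Matrix.trace (EqM * ρ')).re :=
  zeno_coupling_general n
end
end
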